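/- arXiv:1505.03290 — 2 statements merged into one kernel-verified Lean document; each statement's English description precedes it below -/
import Mathlib

section
/- Let R, R' be complex n×n matrices such that R has rank n−1, det(R') = 0, and ‖R − R'‖ ≤ ε/‖R†‖ for some 0 ≤ ε < 1 (operator norm, where R† is the Moore–Penrose pseudoinverse). Then R' has rank n−1 and ‖R†‖/(1+ε) ≤ ‖R'†‖ ≤ ‖R†‖/(1−ε). -/
/-!
For a Moore–Penrose pair `(T, S)`, `‖S‖⁻¹` is the smallest nonzero singular value of `T`: on
`range S` we have `x = S (T x)`, hence `‖x‖ ≤ ‖S‖ ‖T x‖`; and if `‖S y‖ = ‖S‖` with `‖y‖ ≤ 1`,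
then `v = S y` satisfies `‖T v‖ ≤ ‖S‖⁻¹ ‖v‖`, a bound that persists on `ker T ⊔ span {v}` because
the orthogonal projection `S * T` fixes `v` and kills `ker T`.

So `range S` meets no nonzero subspace on which `‖T' x‖ ≤ c ‖x‖` once `‖S‖ (c + ‖T - T'‖) < 1`.
Counting dimensions with `ker T'` and `c = 0` gives `rank T' ≥ rank T`; with
`ker T' ⊔ span {v'}` and `c = ‖S'‖⁻¹` it gives the Weyl-type bound
`‖S‖⁻¹ ≤ ‖S'‖⁻¹ + ‖T - T'‖`, and the estimate follows from it and its mirror image.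
-/

open Matrix
/-- The spectral (operator) norm of a complex matrix. -/
noncomputable def opNorm {n : ℕ} (M : Matrix (Fin n) (Fin n) ℂ) : ℝ :=
  ‖Matrix.toEuclideanCLM (𝕜 := ℂ) M‖

/-- `Rd` is the Moore–Penrose pseudoinverse of `R` (the four Penrose equations,
which characterize it uniquely). -/
def IsMoorePenroseInv {n : ℕ} (R Rd : Matrix (Fin n) (Fin n) ℂ) : Prop :=
  R * Rd * R = R ∧ Rd * R * Rd = Rd ∧ (R * Rd)ᴴ = R * Rd ∧ (Rd * R)ᴴ = Rd * R

open Module LinearMap Metric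

namespace Matrix

variable {m n 𝕜 : Type*} [Fintype n] [DecidableEq n] [RCLike 𝕜]

theorem rank_eq_zero_iff {K : Type*} [Field K] {M : Matrix m n K} : M.rank = 0 ↔ M = 0 := by
  refine ⟨fun h ↦ ?_, fun h ↦ h ▸ rank_zero⟩
  rw [rank, Submodule.finrank_eq_zero, range_eq_bot] at h
  exact toLin'.injective (by rw [toLin'_apply', h, map_zero])

local notation "E" => EuclideanSpace 𝕜 n

theorem finrank_range_toEuclideanCLM (M : Matrix n n 𝕜) :
    finrank 𝕜 (range (toEuclideanCLM (𝕜 := 𝕜) M : E →ₗ[𝕜] E)) = M.rank :=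
  (rank_eq_finrank_range_toLin M (PiLp.basisFun 2 𝕜 n) (PiLp.basisFun 2 𝕜 n)).symm

theorem rank_add_finrank_ker_toEuclideanCLM (M : Matrix n n 𝕜) :
    M.rank + finrank 𝕜 (ker (toEuclideanCLM (𝕜 := 𝕜) M : E →ₗ[𝕜] E)) = Fintype.card n := by
  rw [← finrank_range_toEuclideanCLM, finrank_range_add_finrank_ker, finrank_euclideanSpace]

theorem finrank_ker_toEuclideanCLM_pos_of_det_eq_zero {M : Matrix n n 𝕜} (h : M.det = 0) :
    0 < finrank 𝕜 (ker (toEuclideanCLM (𝕜 := 𝕜) M : E →ₗ[𝕜] E)) := by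
  obtain ⟨v, hv, hMv⟩ := exists_mulVec_eq_zero_iff.2 h
  refine Nat.pos_of_ne_zero fun h0 ↦ hv ?_
  have hv' : WithLp.toLp 2 v ∈ ker (toEuclideanCLM (𝕜 := 𝕜) M : E →ₗ[𝕜] E) := by simp [hMv]
  simpa [Submodule.finrank_eq_zero.1 h0] using hv'

end Matrix

structure IsMoorePenroseInverse {A : Type*} [Mul A] [Star A] (a b : A) : Prop where
  mul_mul_left : a * b * a = a
  mul_mul_right : b * a * b = b
  isSelfAdjoint_mul_left : IsSelfAdjoint (a * b)
  isSelfAdjoint_mul_right : IsSelfAdjoint (b * a)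

namespace IsMoorePenroseInverse

variable {A : Type*}

theorem symm [Mul A] [Star A] {a b : A} (h : IsMoorePenroseInverse a b) :
    IsMoorePenroseInverse b a :=
  ⟨h.mul_mul_right, h.mul_mul_left, h.isSelfAdjoint_mul_right, h.isSelfAdjoint_mul_left⟩

theorem map {B F : Type*} [Mul A] [Star A] [Mul B] [Star B] [FunLike F A B] [MulHomClass F A B]
    [StarHomClass F A B] (f : F) {a b : A} (h : IsMoorePenroseInverse a b) :
    IsMoorePenroseInverse (f a) (f b) where
  mul_mul_left := by rw [← map_mul, ← map_mul, h.mul_mul_left]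
  mul_mul_right := by rw [← map_mul, ← map_mul, h.mul_mul_right]
  isSelfAdjoint_mul_left := map_mul f a b ▸ h.isSelfAdjoint_mul_left.map f
  isSelfAdjoint_mul_right := map_mul f b a ▸ h.isSelfAdjoint_mul_right.map f

theorem isStarProjection_mul_right [Semigroup A] [Star A] {a b : A}
    (h : IsMoorePenroseInverse a b) : IsStarProjection (b * a) where
  isIdempotentElem := by rw [IsIdempotentElem, ← mul_assoc, h.mul_mul_right]
  isSelfAdjoint := h.isSelfAdjoint_mul_right

theorem eq_zero_iff [MulZeroClass A] [Star A] {a b : A} (h : IsMoorePenroseInverse a b) :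
    a = 0 ↔ b = 0 := by
  constructor <;> rintro rfl
  · simpa using h.mul_mul_right.symm
  · simpa using h.mul_mul_left.symm

theorem rank_eq {m R : Type*} [Fintype m] [CommRing R] [StarRing R] [StrongRankCondition R]
    {a b : Matrix m m R} (h : IsMoorePenroseInverse a b) : b.rank = a.rank := by
  refine le_antisymm ?_ ?_
  · conv_lhs => rw [← h.mul_mul_right]
    exact (Matrix.rank_mul_le_left _ _).trans (Matrix.rank_mul_le_right _ _)
  · conv_lhs => rw [← h.mul_mul_left]
    exact (Matrix.rank_mul_le_left _ _).trans (Matrix.rank_mul_le_right _ _)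

theorem rank_eq_zero_iff {m K : Type*} [Fintype m] [DecidableEq m] [Field K] [StarRing K]
    {a b : Matrix m m K} (h : IsMoorePenroseInverse a b) : a.rank = 0 ↔ b = 0 :=
  Matrix.rank_eq_zero_iff.trans h.eq_zero_iff

end IsMoorePenroseInverse

theorem IsMoorePenroseInv.isMoorePenroseInverse {n : ℕ} {R Rd : Matrix (Fin n) (Fin n) ℂ}
    (h : IsMoorePenroseInv R Rd) : IsMoorePenroseInverse R Rd :=
  ⟨h.1, h.2.1, h.2.2.1, h.2.2.2⟩

namespace ContinuousLinearMap

theorem exists_norm_le_one_norm_apply_eq_opNorm {𝕜 E F : Type*} [DenselyNormedField 𝕜]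
    [NormedAddCommGroup E] [NormedSpace 𝕜 E] [ProperSpace E] [NormedAddCommGroup F]
    [NormedSpace 𝕜 F] (f : E →L[𝕜] F) : ∃ x, ‖x‖ ≤ 1 ∧ ‖f x‖ = ‖f‖ := by
  obtain ⟨x, hx, hsup⟩ := (isCompact_closedBall (0 : E) 1).exists_sSup_image_eq
    (nonempty_closedBall.2 zero_le_one) (map_continuous f).norm.continuousOn
  exact ⟨x, mem_closedBall_zero_iff.1 hx, hsup ▸ f.sSup_unitClosedBall_eq_norm⟩

variable {𝕜 E : Type*} [NontriviallyNormedField 𝕜] [NormedAddCommGroup E] [NormedSpace 𝕜 E]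
  {S T T' : E →L[𝕜] E}

theorem norm_le_opNorm_mul_norm_apply_of_mem_range (h : S * T * S = S) {x : E}
    (hx : x ∈ range (S : E →ₗ[𝕜] E)) : ‖x‖ ≤ ‖S‖ * ‖T x‖ := by
  obtain ⟨y, rfl⟩ := hx
  calc ‖S y‖ = ‖S (T (S y))‖ := congr(‖$(h.symm) y‖)
    _ ≤ ‖S‖ * ‖T (S y)‖ := S.le_opNorm _

theorem disjoint_range_of_opNorm_mul_lt_one (h : S * T * S = S) {W : Submodule 𝕜 E} {c : ℝ}
    (hW : ∀ x ∈ W, ‖T' x‖ ≤ c * ‖x‖) (hlt : ‖S‖ * (c + ‖T - T'‖) < 1) :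
    Disjoint (range (S : E →ₗ[𝕜] E)) W := by
  refine Submodule.disjoint_def.2 fun x hxS hxW ↦ norm_le_zero_iff.1 ?_
  have hTx : ‖T x‖ ≤ (c + ‖T - T'‖) * ‖x‖ := calc
    ‖T x‖ = ‖T' x + (T - T') x‖ := by rw [_root_.sub_apply, add_sub_cancel]
    _ ≤ c * ‖x‖ + ‖T - T'‖ * ‖x‖ := (norm_add_le _ _).trans (add_le_add (hW x hxW) (le_opNorm _ _))
    _ = (c + ‖T - T'‖) * ‖x‖ := by ring
  have hx : ‖x‖ ≤ ‖S‖ * (c + ‖T - T'‖) * ‖x‖ := by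
    grw [norm_le_opNorm_mul_norm_apply_of_mem_range h hxS, hTx, mul_assoc]
  nlinarith [norm_nonneg x]

theorem finrank_range_add_finrank_ker_le_of_opNorm_mul_lt_one [FiniteDimensional 𝕜 E]
    (h : S * T * S = S) (hlt : ‖S‖ * ‖T - T'‖ < 1) :
    finrank 𝕜 (range (S : E →ₗ[𝕜] E)) + finrank 𝕜 (ker (T' : E →ₗ[𝕜] E)) ≤ finrank 𝕜 E :=
  Submodule.finrank_add_finrank_le_of_disjoint <|
    disjoint_range_of_opNorm_mul_lt_one h (c := 0) (fun x hx ↦ by simpa using mem_ker.1 hx)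
      (by simpa using hlt)

end ContinuousLinearMap

namespace IsMoorePenroseInverse

open ContinuousLinearMap

variable {𝕜 E : Type*} [RCLike 𝕜] [NormedAddCommGroup E] [InnerProductSpace 𝕜 E]
  [CompleteSpace E] [FiniteDimensional 𝕜 E] {S T S' T' : E →L[𝕜] E}

theorem exists_finrank_eq_finrank_ker_add_one_norm_apply_le (h : IsMoorePenroseInverse T S)
    (hS : S ≠ 0) :
    ∃ W : Submodule 𝕜 E, finrank 𝕜 W = finrank 𝕜 (ker (T : E →ₗ[𝕜] E)) + 1 ∧
      ∀ x ∈ W, ‖T x‖ ≤ ‖S‖⁻¹ * ‖x‖ := by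
  have := FiniteDimensional.proper_rclike 𝕜 E
  obtain ⟨y, hy, hSy⟩ := S.exists_norm_le_one_norm_apply_eq_opNorm
  have hS0 : 0 < ‖S‖ := norm_pos_iff.2 hS
  have hST : ‖S * T‖ ≤ 1 := h.isStarProjection_mul_right.norm_le
  have hTS : ‖T * S‖ ≤ 1 := h.symm.isStarProjection_mul_right.norm_le
  set v := S y
  have hSTv : S (T v) = v := congr($(h.mul_mul_right) y)
  have hTv : ‖T v‖ ≤ ‖S‖⁻¹ * ‖v‖ := by
    rw [hSy, inv_mul_cancel₀ hS0.ne']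
    exact (T * S).le_of_opNorm_le hTS y |>.trans (by simpa using hy)
  have hv0 : v ≠ 0 := norm_ne_zero_iff.1 (hSy ▸ hS0.ne')
  have hv : v ∉ ker (T : E →ₗ[𝕜] E) := fun hk ↦
    hv0 <| by rw [← hSTv, show T v = 0 from hk, map_zero]
  refine ⟨ker (T : E →ₗ[𝕜] E) ⊔ 𝕜 ∙ v, Submodule.finrank_sup_span_singleton hv, ?_⟩
  intro x hx
  obtain ⟨k, hk, w, hw, rfl⟩ := Submodule.mem_sup.1 hx
  obtain ⟨a, rfl⟩ := Submodule.mem_span_singleton.1 hw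
  replace hk : T k = 0 := hk
  have hproj : (S * T) (k + a • v) = a • v := by simp [hk, hSTv]
  calc ‖T (k + a • v)‖ = ‖a‖ * ‖T v‖ := by rw [map_add, hk, zero_add, map_smul, norm_smul]
    _ ≤ ‖a‖ * (‖S‖⁻¹ * ‖v‖) := by gcongr
    _ = ‖S‖⁻¹ * ‖a • v‖ := by rw [norm_smul]; ring
    _ ≤ ‖S‖⁻¹ * ‖k + a • v‖ := by
      gcongr
      calc ‖a • v‖ = ‖(S * T) (k + a • v)‖ := by rw [hproj]
        _ ≤ ‖k + a • v‖ := ((S * T).le_of_opNorm_le hST _).trans_eq (one_mul _)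

theorem inv_opNorm_le_inv_opNorm_add_norm_sub (h' : IsMoorePenroseInverse T' S') (hS' : S' ≠ 0)
    (hS : S * T * S = S)
    (hdim : finrank 𝕜 E ≤ finrank 𝕜 (range (S : E →ₗ[𝕜] E)) + finrank 𝕜 (ker (T' : E →ₗ[𝕜] E))) :
    ‖S‖⁻¹ ≤ ‖S'‖⁻¹ + ‖T - T'‖ := by
  obtain ⟨W, hWdim, hW⟩ := h'.exists_finrank_eq_finrank_ker_add_one_norm_apply_le hS'
  by_contra! hlt
  have hlt' : ‖S‖ * (‖S'‖⁻¹ + ‖T - T'‖) < 1 := by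
    rcases (norm_nonneg S).eq_or_lt with h0 | h0
    · simp [← h0]
    · simpa [h0.ne'] using mul_lt_mul_of_pos_left hlt h0
  have := Submodule.finrank_add_finrank_le_of_disjoint
    (disjoint_range_of_opNorm_mul_lt_one hS hW hlt')
  omega

end IsMoorePenroseInverse

theorem le_mul_one_add_mul_of_inv_le_inv_add {x y d : ℝ} (hx : 0 < x) (hy : 0 < y)
    (h : x⁻¹ ≤ y⁻¹ + d) : y ≤ x * (1 + y * d) := by
  have := mul_le_mul_of_nonneg_left h (mul_pos hx hy).le
  field_simp at this
  linarith

theorem div_one_add_le_and_le_div_one_sub {a b d ε : ℝ} (ha : 0 < a) (hb : 0 < b)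
    (hε0 : 0 ≤ ε) (hε1 : ε < 1) (hd : a * d ≤ ε)
    (hab : a⁻¹ ≤ b⁻¹ + d) (hba : b⁻¹ ≤ a⁻¹ + d) : a / (1 + ε) ≤ b ∧ b ≤ a / (1 - ε) := by
  constructor
  · rw [div_le_iff₀ (by linarith)]
    calc a ≤ b * (1 + a * d) := le_mul_one_add_mul_of_inv_le_inv_add hb ha hba
      _ ≤ b * (1 + ε) := by gcongr
  · rw [le_div_iff₀ (by linarith)]
    nlinarith [le_mul_one_add_mul_of_inv_le_inv_add ha hb hab]

section PseudoinversePerturbation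

variable {n : ℕ} {R R' Rd Rd' : Matrix (Fin n) (Fin n) ℂ}

theorem opNorm_pos (h : Rd ≠ 0) : 0 < opNorm Rd :=
  norm_pos_iff.2 ((map_ne_zero_iff _ toEuclideanCLM.injective).2 h)

theorem opNorm_sub_comm (R R' : Matrix (Fin n) (Fin n) ℂ) : opNorm (R - R') = opNorm (R' - R) := by
  simp only [opNorm, map_sub, norm_sub_rev]

theorem IsMoorePenroseInv.rank_eq_of_opNorm_mul_lt_one (hRd : IsMoorePenroseInv R Rd)
    (hrank : R.rank = n - 1) (hdet : R'.det = 0) (h : opNorm Rd * opNorm (R - R') < 1) :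
    R'.rank = n - 1 := by
  have hdim := ContinuousLinearMap.finrank_range_add_finrank_ker_le_of_opNorm_mul_lt_one
    (hRd.isMoorePenroseInverse.map toEuclideanCLM).mul_mul_right (T' := toEuclideanCLM (𝕜 := ℂ) R')
    (by rwa [opNorm, opNorm, map_sub] at h)
  rw [finrank_euclideanSpace_fin, finrank_range_toEuclideanCLM,
    hRd.isMoorePenroseInverse.rank_eq, hrank] at hdim
  have hnull := rank_add_finrank_ker_toEuclideanCLM R'
  have hker := finrank_ker_toEuclideanCLM_pos_of_det_eq_zero hdet
  rw [Fintype.card_fin] at hnull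
  omega

theorem IsMoorePenroseInv.inv_opNorm_le_inv_opNorm_add_opNorm_sub (hRd : IsMoorePenroseInv R Rd)
    (hRd' : IsMoorePenroseInv R' Rd') (hRd'0 : Rd' ≠ 0) (hrank : R.rank = n - 1)
    (hrank' : R'.rank ≤ n - 1) :
    (opNorm Rd)⁻¹ ≤ (opNorm Rd')⁻¹ + opNorm (R - R') := by
  have hrange := finrank_range_toEuclideanCLM Rd
  have hnull := rank_add_finrank_ker_toEuclideanCLM R'
  rw [hRd.isMoorePenroseInverse.rank_eq, hrank] at hrange
  rw [Fintype.card_fin] at hnull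
  rw [opNorm, opNorm, opNorm, map_sub]
  exact (hRd'.isMoorePenroseInverse.map toEuclideanCLM).inv_opNorm_le_inv_opNorm_add_norm_sub
    ((map_ne_zero_iff _ toEuclideanCLM.injective).2 hRd'0)
    (hRd.isMoorePenroseInverse.map toEuclideanCLM).mul_mul_right
    (by rw [finrank_euclideanSpace_fin, hrange]; omega)

end PseudoinversePerturbation

/-- If `R` has rank `n−1`, `det R' = 0` and `‖R − R'‖ ≤ ε/‖R†‖` with `0 ≤ ε < 1`,
then `R'` has rank `n−1` and `‖R†‖/(1+ε) ≤ ‖R'†‖ ≤ ‖R†‖/(1−ε)`. -/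
theorem pseudoinverse_norm_perturbation {n : ℕ} (R R' Rd Rd' : Matrix (Fin n) (Fin n) ℂ)
    (hRd : IsMoorePenroseInv R Rd) (hRd' : IsMoorePenroseInv R' Rd')
    (hrank : R.rank = n - 1) (hdet : R'.det = 0)
    (ε : ℝ) (hε0 : 0 ≤ ε) (hε1 : ε < 1)
    (hclose : opNorm (R - R') ≤ ε / opNorm Rd) :
    R'.rank = n - 1 ∧
      opNorm Rd / (1 + ε) ≤ opNorm Rd' ∧ opNorm Rd' ≤ opNorm Rd / (1 - ε) := by
  have hP := hRd.isMoorePenroseInverse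
  have hP' := hRd'.isMoorePenroseInverse
  obtain rfl | hRd0 := eq_or_ne Rd 0
  · -- `R = 0`, and the junk value `ε / opNorm 0 = 0` forces `R' = R`
    obtain rfl := hP.eq_zero_iff.2 rfl
    have hR' : R' = 0 := by
      rw [opNorm_sub_comm] at hclose
      simpa [opNorm] using hclose
    obtain rfl := hP'.eq_zero_iff.1 hR'
    simp [opNorm, hR', hrank]
  have hd : opNorm Rd * opNorm (R - R') ≤ ε := by rwa [le_div_iff₀' (opNorm_pos hRd0)] at hclose
  have hrank' := hRd.rank_eq_of_opNorm_mul_lt_one hrank hdet (hd.trans_lt hε1)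
  have hRd'0 : Rd' ≠ 0 := by
    rwa [Ne, ← hP'.rank_eq_zero_iff, hrank', ← hrank, hP.rank_eq_zero_iff]
  refine ⟨hrank', div_one_add_le_and_le_div_one_sub (opNorm_pos hRd0) (opNorm_pos hRd'0) hε0 hε1 hd
    (hRd.inv_opNorm_le_inv_opNorm_add_opNorm_sub hRd' hRd'0 hrank hrank'.le) ?_⟩
  rw [opNorm_sub_comm]
  exact hRd'.inv_opNorm_le_inv_opNorm_add_opNorm_sub hRd hRd0 hrank' hrank.le
end

section
/- Let A₀, A₁ ∈ ℂ^{n×n} be ℝ-linearly independent and set A_t = (1−t)A₀ + tA₁ for t ∈ [0,1]. Then for every t, the derivative of the normalized path satisfies ‖d/dt (A_t/‖A_t‖_F)‖_F ≤ ‖A₀‖_F·‖A₁‖_F / ‖A_t‖_F². -/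
/-!
Write `A_t = (1 - t) • A₀ + t • A₁`. The derivative of `A_t / ‖A_t‖` is `‖A_t‖⁻¹` times the
component of `Ȧ_t = A₁ - A₀` orthogonal to `A_t`, so its squared norm is the Gram determinant
of `(A_t, A₁ - A₀)` divided by `‖A_t‖⁴`. That pair arises from `(A₀, A₁)` by a change of basis
of determinant `±1`, so the Gram determinant equals
`‖A₀‖²‖A₁‖² - ⟪A₀, A₁⟫² ≤ ‖A₀‖²‖A₁‖²`.
-/

open Matrix

attribute [local instance] Matrix.frobeniusNormedAddCommGroup Matrix.frobeniusNormedSpace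

open scoped RealInnerProductSpace

section InnerProductSpace

variable {F : Type*} [NormedAddCommGroup F] [InnerProductSpace ℝ F]

def gramDet (x y : F) : ℝ := ‖x‖ ^ 2 * ‖y‖ ^ 2 - ⟪x, y⟫ ^ 2

theorem gramDet_segment_sub (x₀ x₁ : F) (t : ℝ) :
    gramDet ((1 - t) • x₀ + t • x₁) (x₁ - x₀) = gramDet x₀ x₁ := by
  simp only [gramDet, ← real_inner_self_eq_norm_sq, inner_add_left, inner_add_right,
    inner_sub_left, inner_sub_right, real_inner_smul_left, real_inner_smul_right,
    real_inner_comm x₀ x₁]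
  ring

theorem hasDerivAt_segment (x₀ x₁ : F) (t : ℝ) :
    HasDerivAt (fun s : ℝ => (1 - s) • x₀ + s • x₁) (x₁ - x₀) t := by
  have h₀ := ((hasDerivAt_id t).const_sub 1).smul_const x₀
  have h₁ := (hasDerivAt_id t).smul_const x₁
  exact (h₀.add h₁).congr_deriv (by module)

theorem LinearIndependent.segment_ne_zero {x₀ x₁ : F} (h : LinearIndependent ℝ ![x₀, x₁])
    (t : ℝ) : (1 - t) • x₀ + t • x₁ ≠ 0 := fun h0 => by
  obtain ⟨h₀, h₁⟩ := LinearIndependent.pair_iff.mp h _ _ h0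
  linarith

theorem HasDerivAt.norm {f : ℝ → F} {f' : F} {x : ℝ} (hf : HasDerivAt f f' x) (h0 : f x ≠ 0) :
    HasDerivAt (‖f ·‖) (⟪f x, f'⟫ / ‖f x‖) x := by
  have h := hf.norm_sq.sqrt (by positivity)
  simp only [Real.sqrt_sq (norm_nonneg _)] at h
  convert h using 1
  field_simp

theorem HasDerivAt.inv_norm_smul {f : ℝ → F} {f' : F} {x : ℝ} (hf : HasDerivAt f f' x)
    (h0 : f x ≠ 0) :
    HasDerivAt (fun s => ‖f s‖⁻¹ • f s) (‖f x‖⁻¹ • f' - (⟪f x, f'⟫ / ‖f x‖ ^ 3) • f x) x := by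
  refine (((hf.norm h0).inv (norm_ne_zero_iff.mpr h0)).smul hf).congr_deriv ?_
  rw [sub_eq_add_neg, ← neg_smul]
  congr 2
  field_simp

theorem norm_sq_inv_norm_smul_sub_inner_smul {x : F} (v : F) (h0 : x ≠ 0) :
    ‖‖x‖⁻¹ • v - (⟪x, v⟫ / ‖x‖ ^ 3) • x‖ ^ 2 = gramDet x v / ‖x‖ ^ 4 := by
  have hx : ‖x‖ ≠ 0 := norm_ne_zero_iff.mpr h0
  rw [← real_inner_self_eq_norm_sq]
  simp only [inner_sub_left, inner_sub_right, real_inner_smul_left, real_inner_smul_right,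
    real_inner_comm x v]
  simp only [gramDet, real_inner_self_eq_norm_sq]
  field_simp
  ring

theorem norm_deriv_normalized_segment_le {x₀ x₁ : F} (h : LinearIndependent ℝ ![x₀, x₁])
    (t : ℝ) {D : F}
    (hD : HasDerivAt (fun s : ℝ => ‖(1 - s) • x₀ + s • x₁‖⁻¹ • ((1 - s) • x₀ + s • x₁)) D t) :
    ‖D‖ ≤ ‖x₀‖ * ‖x₁‖ / ‖(1 - t) • x₀ + t • x₁‖ ^ 2 := by
  have h0 := h.segment_ne_zero t
  have hD_eq := hD.unique ((hasDerivAt_segment x₀ x₁ t).inv_norm_smul h0)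
  have hsq : ‖D‖ ^ 2 ≤ (‖x₀‖ * ‖x₁‖ / ‖(1 - t) • x₀ + t • x₁‖ ^ 2) ^ 2 := by
    rw [hD_eq, norm_sq_inv_norm_smul_sub_inner_smul _ h0, gramDet_segment_sub, div_pow, mul_pow,
      ← pow_mul]
    gcongr
    exact sub_le_self _ (sq_nonneg _)
  exact le_of_sq_le_sq hsq (by positivity)

end InnerProductSpace

/-- The real part of the Frobenius inner product, `Re tr(Aᴴ B)`; it induces the Frobenius
norm. -/
noncomputable abbrev Matrix.frobeniusInnerProductSpace {m n E : Type*} [Fintype m] [Fintype n]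
    [NormedAddCommGroup E] [InnerProductSpace ℝ E] :
    InnerProductSpace ℝ (Matrix m n E) where
  toNormedSpace := Matrix.frobeniusNormedSpace
  inner A B := ∑ i, ∑ j, ⟪A i j, B i j⟫
  norm_sq_eq_re_inner A := by
    rw [frobenius_norm_def, ← Real.rpow_natCast, ← Real.rpow_mul (by positivity)]
    simp
  conj_inner_symm A B := by simp [real_inner_comm]
  add_left A B C := by simp only [Matrix.add_apply, inner_add_left, Finset.sum_add_distrib]
  smul_left A B r := by simp [real_inner_smul_left, Finset.mul_sum]

attribute [local instance] Matrix.frobeniusInnerProductSpace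

theorem deriv_normalized_segment_le_general {n : ℕ} (A0 A1 : Matrix (Fin n) (Fin n) ℂ)
    (hind : LinearIndependent ℝ ![A0, A1]) (t : ℝ)
    (D : Matrix (Fin n) (Fin n) ℂ)
    (hD : HasDerivAt
      (fun s : ℝ => ‖(1 - s) • A0 + s • A1‖⁻¹ • ((1 - s) • A0 + s • A1)) D t) :
    ‖D‖ ≤ ‖A0‖ * ‖A1‖ / ‖(1 - t) • A0 + t • A1‖ ^ 2 :=
  norm_deriv_normalized_segment_le hind t hD

/-- For ℝ-linearly independent `A₀, A₁ ∈ ℂ^{n×n}` and `A_t = (1−t)A₀ + tA₁`,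
the derivative of the Frobenius-normalized path satisfies
`‖d/dt (A_t/‖A_t‖_F)‖_F ≤ ‖A₀‖_F‖A₁‖_F/‖A_t‖_F²` for all `t ∈ [0,1]`. -/
theorem deriv_normalized_segment_le {n : ℕ} (A0 A1 : Matrix (Fin n) (Fin n) ℂ)
    (hind : LinearIndependent ℝ ![A0, A1]) (t : ℝ) (ht : t ∈ Set.Icc (0 : ℝ) 1)
    (D : Matrix (Fin n) (Fin n) ℂ)
    (hD : HasDerivAt
      (fun s : ℝ => ‖(1 - s) • A0 + s • A1‖⁻¹ • ((1 - s) • A0 + s • A1)) D t) :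
    ‖D‖ ≤ ‖A0‖ * ‖A1‖ / ‖(1 - t) • A0 + t • A1‖ ^ 2 :=
  deriv_normalized_segment_le_general A0 A1 hind t D hD
end
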